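/- Let (D_i, Γⁱ)_{i∈ℕ} be a parametrix possessing complex of pre-Hilbert A-modules. Then for each i ∈ ℕ the i-th cohomology group H^i(D,A) = Ker(D_i : Γⁱ → Γ^{i+1}) / Rng(D_{i-1} : Γ^{i-1} → Γⁱ) is isomorphic as an A-module to the module of harmonic elements K^i(D,A) = Ker(Δ_i : Γⁱ → Γⁱ). -/

import Mathlib

/-- A pre-Hilbert module over a unital C*-algebra `A`: a left `A`-module equipped with an
`A`-valued inner product (`A`-linear in the first argument, conjugate-symmetric, positive
definite), whose norm is the one induced by the inner product. -/
class PreHilbertModule (A : Type*) (U : Type*) [CStarAlgebra A] [PartialOrder A]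
    [StarOrderedRing A] [NormedAddCommGroup U] [Module A U] extends Inner A U where
  inner_add_left (x y z : U) : inner (x + y) z = inner x z + inner y z
  inner_smul_left (a : A) (x y : U) : inner (a • x) y = a * inner x y
  star_inner (x y : U) : star (inner x y) = inner y x
  inner_self_nonneg (x : U) : 0 ≤ inner x x
  inner_self_eq_zero (x : U) : inner x x = 0 ↔ x = 0
  norm_eq (x : U) : ‖x‖ = Real.sqrt ‖inner x x‖

/-!
Harmonic representatives come from the projection `p` of the parametrix: every `x` splits as
`x = Δ (g x) + p x` with `p x` harmonic. Since `Δ` is the sum of the two nonnegative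
operators `D_{i-1} D_{i-1}*` and `D_i* D_i`, a harmonic element is annihilated by `D_i` and
`D_{i-1}*`, hence orthogonal to `Rng Δ_i` and to `Rng D_{i-1}`. So `p` maps `Ker D_i` onto the
harmonic elements, and its kernel there is exactly `Rng D_{i-1}`.
-/

open ContinuousLinearMap

structure IsParametrix {R M : Type*} [Semiring R] [TopologicalSpace M] [AddCommMonoid M]
    [ContinuousAdd M] [Module R M] (Δ g p : M →L[R] M) : Prop where
  id_eq_comp_left_add : ContinuousLinearMap.id R M = g.comp Δ + p
  id_eq_comp_right_add : ContinuousLinearMap.id R M = Δ.comp g + p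
  comp_proj_eq_zero : Δ.comp p = 0

namespace IsParametrix

variable {R M : Type*} [Semiring R] [TopologicalSpace M] [AddCommMonoid M] [ContinuousAdd M]
  [Module R M] {Δ g p : M →L[R] M} (hP : IsParametrix Δ g p)
include hP

theorem apply_proj (x : M) : Δ (p x) = 0 := by
  simpa using congr($hP.comp_proj_eq_zero x)

theorem apply_add_proj (x : M) : Δ (g x) + p x = x := by
  simpa using congr($hP.id_eq_comp_right_add x).symm

theorem proj_apply_of_apply_eq_zero {y : M} (hy : Δ y = 0) : p y = y := by
  simpa [hy] using congr($hP.id_eq_comp_left_add y).symm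

def harmonicPart (S : Submodule R M) : S →ₗ[R] LinearMap.ker (Δ : M →ₗ[R] M) :=
  ((p : M →ₗ[R] M).comp S.subtype).codRestrict _ fun x => hP.apply_proj x

@[simp]
theorem coe_harmonicPart_apply (S : Submodule R M) (x : S) : (hP.harmonicPart S x : M) = p x :=
  rfl

end IsParametrix

namespace PreHilbertModule

variable {A : Type*} [CStarAlgebra A] [PartialOrder A] [StarOrderedRing A]

section Inner

variable {U : Type*} [NormedAddCommGroup U] [Module A U] [PreHilbertModule A U]

theorem inner_zero_left (y : U) : (inner A (0 : U) y : A) = 0 := by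
  simpa using inner_add_left (A := A) (0 : U) 0 y

theorem inner_zero_right (x : U) : (inner A x (0 : U) : A) = 0 := by
  rw [← star_inner, inner_zero_left, star_zero]

theorem inner_add_right (x y z : U) :
    (inner A x (y + z) : A) = inner A x y + inner A x z := by
  rw [← star_inner, inner_add_left, star_add, star_inner, star_inner]

end Inner

variable {U V W : Type*} [NormedAddCommGroup U] [Module A U] [PreHilbertModule A U]
  [NormedAddCommGroup V] [Module A V] [PreHilbertModule A V]
  [NormedAddCommGroup W] [Module A W] [PreHilbertModule A W]

def IsAdjointPair (f : U →L[A] V) (f' : V →L[A] U) : Prop :=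
  ∀ u v, (inner A (f u) v : A) = inner A u (f' v)

namespace IsAdjointPair

variable {f : U →L[A] V} {f' : V →L[A] U}

theorem symm (h : IsAdjointPair f f') : IsAdjointPair f' f := fun v u => by
  rw [← star_inner, ← h, star_inner]

theorem comp {g : V →L[A] W} {g' : W →L[A] V} (hf : IsAdjointPair f f')
    (hg : IsAdjointPair g g') : IsAdjointPair (g.comp f) (f'.comp g') :=
  fun u w => (hg (f u) w).trans (hf u (g' w))

theorem add {g : U →L[A] V} {g' : V →L[A] U} (hf : IsAdjointPair f f')
    (hg : IsAdjointPair g g') : IsAdjointPair (f + g) (f' + g') := fun u v => by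
  rw [add_apply, add_apply, inner_add_left, inner_add_right, hf, hg]

theorem zero : IsAdjointPair (0 : U →L[A] V) 0 := fun u v => by
  rw [zero_apply, zero_apply, inner_zero_left, inner_zero_right]

theorem apply_eq_zero_of_adjoint_apply_eq_zero (h : IsAdjointPair f f') {u : U}
    (hu : f' (f u) = 0) : f u = 0 :=
  (inner_self_eq_zero _).mp (by rw [h, hu, inner_zero_right])

end IsAdjointPair

variable {d₀ : U →L[A] V} {d₀' : V →L[A] U} {d₁ : V →L[A] W} {d₁' : W →L[A] V}
  {Δ g p : V →L[A] V}

theorem isAdjointPair_laplacian (h₀ : IsAdjointPair d₀ d₀')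
    (h₁ : IsAdjointPair d₁ d₁') (hΔ : Δ = d₀.comp d₀' + d₁'.comp d₁) : IsAdjointPair Δ Δ :=
  hΔ ▸ (h₀.symm.comp h₀).add (h₁.comp h₁.symm)

theorem laplacian_apply_eq_zero_iff (h₀ : IsAdjointPair d₀ d₀')
    (h₁ : IsAdjointPair d₁ d₁') (hΔ : Δ = d₀.comp d₀' + d₁'.comp d₁) {x : V} :
    Δ x = 0 ↔ d₀' x = 0 ∧ d₁ x = 0 := by
  subst hΔ
  refine ⟨fun hx => ?_, fun ⟨h0, h1⟩ => by simp [h0, h1]⟩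
  have hsum : inner A (d₀' x) (d₀' x) + inner A (d₁ x) (d₁ x) = (0 : A) := by
    rw [h₀.symm, h₁, ← inner_add_right]
    simpa using congr(inner A x $hx).trans (inner_zero_right x)
  obtain ⟨h0, h1⟩ :=
    (add_eq_zero_iff_of_nonneg (inner_self_nonneg _) (inner_self_nonneg _)).mp hsum
  exact ⟨(inner_self_eq_zero _).mp h0, (inner_self_eq_zero _).mp h1⟩

theorem proj_apply_eq_zero_iff_mem_range (h₀ : IsAdjointPair d₀ d₀')
    (h₁ : IsAdjointPair d₁ d₁') (hd : d₁.comp d₀ = 0) (hΔ : Δ = d₀.comp d₀' + d₁'.comp d₁)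
    (hP : IsParametrix Δ g p) {x : V} (hx : d₁ x = 0) :
    p x = 0 ↔ x ∈ LinearMap.range (d₀ : U →ₗ[A] V) := by
  have hsplit := hP.apply_add_proj x
  constructor
  · intro hpx
    have hxΔ : d₀ (d₀' (g x)) + d₁' (d₁ (g x)) = x := by
      simpa [hΔ, hpx] using hsplit
    have hd_apply (u : U) : d₁ (d₀ u) = 0 := by simpa using congr($hd u)
    have hcoexact : d₁' (d₁ (g x)) = 0 := by
      refine h₁.symm.apply_eq_zero_of_adjoint_apply_eq_zero ?_
      simpa [hd_apply, hx] using congr(d₁ $hxΔ)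
    exact ⟨d₀' (g x), by simpa [hcoexact] using hxΔ⟩
  · rintro ⟨w, hw⟩
    have hharm := (laplacian_apply_eq_zero_iff h₀ h₁ hΔ).mp (hP.apply_proj x)
    have hexact : (inner A x (p x) : A) = 0 := by
      nth_rw 1 [← hw]
      rw [coe_coe, h₀, hharm.1, inner_zero_right]
    have hrange : (inner A (Δ (g x)) (p x) : A) = 0 := by
      rw [isAdjointPair_laplacian h₀ h₁ hΔ, hP.apply_proj, inner_zero_right]
    refine (inner_self_eq_zero (A := A) _).mp ?_
    simpa [inner_add_left, hrange, hexact] using congr(inner A $hsplit (p x))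

noncomputable def cohomologyEquivHarmonic (h₀ : IsAdjointPair d₀ d₀')
    (h₁ : IsAdjointPair d₁ d₁') (hd : d₁.comp d₀ = 0) (hΔ : Δ = d₀.comp d₀' + d₁'.comp d₁)
    (hP : IsParametrix Δ g p) :
    (LinearMap.ker (d₁ : V →ₗ[A] W) ⧸
        (LinearMap.range (d₀ : U →ₗ[A] V)).comap (LinearMap.ker (d₁ : V →ₗ[A] W)).subtype)
      ≃ₗ[A] LinearMap.ker (Δ : V →ₗ[A] V) :=
  have hker : LinearMap.ker (hP.harmonicPart _) =
      (LinearMap.range (d₀ : U →ₗ[A] V)).comap (LinearMap.ker (d₁ : V →ₗ[A] W)).subtype := by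
    ext x
    rw [LinearMap.mem_ker, Subtype.ext_iff, hP.coe_harmonicPart_apply,
      Submodule.mem_comap]
    exact proj_apply_eq_zero_iff_mem_range h₀ h₁ hd hΔ hP x.2
  have hsurj : Function.Surjective (hP.harmonicPart (LinearMap.ker (d₁ : V →ₗ[A] W))) :=
    fun ⟨y, hy⟩ => ⟨⟨y, ((laplacian_apply_eq_zero_iff h₀ h₁ hΔ).mp hy).2⟩,
      Subtype.ext (hP.proj_apply_of_apply_eq_zero hy)⟩
  (Submodule.quotEquivOfEq _ _ hker.symm).trans (LinearMap.quotKerEquivOfSurjective _ hsurj)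

end PreHilbertModule

open PreHilbertModule in
/-- Theorem 4: for a parametrix possessing complex `(D_i, Γ^i)_{i ∈ ℕ}` of
pre-Hilbert `A`-modules, each cohomology group `H^i(D,A) = Ker D_i / Rng D_{i-1}`
(with `D_{-1} := 0`) is `A`-linearly isomorphic to the module of harmonic elements
`K^i(D,A) = Ker Δ_i`. -/
theorem cohomology_iso_harmonic
    {A : Type*} [CStarAlgebra A] [PartialOrder A] [StarOrderedRing A]
    {Γ : ℕ → Type*} [∀ i, NormedAddCommGroup (Γ i)] [∀ i, Module A (Γ i)]
    [∀ i, PreHilbertModule A (Γ i)]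
    (D : ∀ i, Γ i →L[A] Γ (i + 1)) (Dstar : ∀ i, Γ (i + 1) →L[A] Γ i)
    (hadj : ∀ i (u : Γ i) (v : Γ (i + 1)), (inner A (D i u) v : A) = inner A u (Dstar i v))
    (hcomplex : ∀ i, (D (i + 1)).comp (D i) = 0)
    -- the associated Laplacians (with `D_{-1} := 0`)
    (Δ : ∀ i, Γ i →L[A] Γ i)
    (hΔ0 : Δ 0 = (Dstar 0).comp (D 0))
    (hΔ : ∀ i, Δ (i + 1) = (D i).comp (Dstar i) + (Dstar (i + 1)).comp (D (i + 1)))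
    -- the complex is parametrix possessing
    (g p : ∀ i, Γ i →L[A] Γ i)
    (ha : ∀ i, ContinuousLinearMap.id A (Γ i) = (g i).comp (Δ i) + p i)
    (hb : ∀ i, ContinuousLinearMap.id A (Γ i) = (Δ i).comp (g i) + p i)
    (hc : ∀ i, (Δ i).comp (p i) = 0) :
    Nonempty ((LinearMap.ker (D 0 : Γ 0 →ₗ[A] Γ (0 + 1)) ⧸ (⊥ : Submodule A (LinearMap.ker (D 0 : Γ 0 →ₗ[A] Γ (0 + 1)))))
        ≃ₗ[A] LinearMap.ker (Δ 0 : Γ 0 →ₗ[A] Γ 0)) ∧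
    ∀ i, Nonempty ((LinearMap.ker (D (i + 1) : Γ (i + 1) →ₗ[A] Γ (i + 1 + 1)) ⧸
        Submodule.comap (LinearMap.ker (D (i + 1) : Γ (i + 1) →ₗ[A] Γ (i + 1 + 1))).subtype (LinearMap.range (D i : Γ i →ₗ[A] Γ (i + 1))))
        ≃ₗ[A] LinearMap.ker (Δ (i + 1) : Γ (i + 1) →ₗ[A] Γ (i + 1))) := by
  have hP : ∀ i, IsParametrix (Δ i) (g i) (p i) := fun i => ⟨ha i, hb i, hc i⟩
  refine ⟨⟨?_⟩, fun i => ⟨cohomologyEquivHarmonic (hadj i) (hadj (i + 1)) (hcomplex i) (hΔ i)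
    (hP (i + 1))⟩⟩
  -- in degree `0` the missing `D_{-1}` is the zero map `Γ 0 → Γ 0`
  have hbot : (LinearMap.range ((0 : Γ 0 →L[A] Γ 0) : Γ 0 →ₗ[A] Γ 0)).comap
      (LinearMap.ker (D 0 : Γ 0 →ₗ[A] Γ (0 + 1))).subtype = ⊥ := by
    simp
  exact (Submodule.quotEquivOfEq _ _ hbot.symm).trans
    (cohomologyEquivHarmonic IsAdjointPair.zero (hadj 0) (comp_zero _) (by simp [hΔ0]) (hP 0))
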